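/- Suppose f : R^n → R is C^2 with L-Lipschitz Hessian. Let d^1,…,d^p span R^n with D = [d^1 ⋯ d^p], all d^i nonzero, and let H ∈ S_n(R) be a matrix such that for all i, |(d^i)ᵀ(H − ∇²f(x^0))d^i| ≤ (L/3)||d^i||³ and for all i ≠ j, |(d^i)ᵀ(H − ∇²f(x^0))d^j| ≤ C Δ_D² for a constant C ≥ 0, where Δ_D = max_k ||d^k||. Then ||H − ∇²f(x^0)|| ≤ (p − 1/p) C ||(D/Δ_D)†||² + (L/3)||(D/Δ_D)†||² (2p − 2/p + 1) Δ_D. -/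

import Mathlib

open Matrix
open scoped RealInnerProductSpace

noncomputable section

abbrev Eu (n : ℕ) := EuclideanSpace ℝ (Fin n)

def IsMP {a b : ℕ} (A : Matrix (Fin a) (Fin b) ℝ) (A' : Matrix (Fin b) (Fin a) ℝ) : Prop :=
  A * A' * A = A ∧ A' * A * A' = A' ∧ (A * A')ᵀ = A * A' ∧ (A' * A)ᵀ = A' * A

def euclNorm {k : ℕ} (v : Fin k → ℝ) : ℝ := Real.sqrt (∑ i, v i ^ 2)

def spNorm {a b : ℕ} (A : Matrix (Fin a) (Fin b) ℝ) : ℝ :=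
  ⨆ v : {v : Fin b → ℝ // euclNorm v ≤ 1}, euclNorm (A.mulVec v.1)

def frobNorm {a b : ℕ} (A : Matrix (Fin a) (Fin b) ℝ) : ℝ :=
  Real.sqrt (∑ i, ∑ j, A i j ^ 2)

def mat1Norm {a b : ℕ} (A : Matrix (Fin a) (Fin b) ℝ) : ℝ := ⨆ j, ∑ i, |A i j|

/-!
Put `M = D / Δ` and `G = Mᵀ E M` with `E = H - ∇²f(x⁰)`, so that `G i j = Δ⁻² ⟪dⁱ, E dʲ⟫`.
Since the `dⁱ` span, `M` is onto, and the Penrose identities then force `M M† = 1`;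
hence `E = (M†)ᵀ G M†` and `‖E‖ ≤ ‖M†‖² ‖G‖`. The hypotheses bound the diagonal entries
of `G` by `LΔ/3` and the others by `C`, and Cauchy–Schwarz over the `p(p-1)` off-diagonal
pairs gives `‖G‖ ≤ LΔ/3 + (p-1)C`, which is below the claimed bound since `p - 1 ≤ p - 1/p`.
-/

open Finset
open scoped Matrix.Norms.L2Operator

lemma euclNorm_eq_norm_toLp {k : ℕ} (v : Fin k → ℝ) :
    euclNorm v = ‖(WithLp.toLp 2 v : Eu k)‖ := by
  simp [euclNorm, EuclideanSpace.norm_eq]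

lemma euclNorm_sq_eq_dotProduct {k : ℕ} (v : Fin k → ℝ) : euclNorm v ^ 2 = v ⬝ᵥ v := by
  rw [euclNorm, Real.sq_sqrt (by positivity)]
  simp [dotProduct, sq]

lemma euclNorm_abs {k : ℕ} (v : Fin k → ℝ) : euclNorm (|v|) = euclNorm v := by
  simp [euclNorm]

lemma euclNorm_mulVec_le {a b : ℕ} (A : Matrix (Fin a) (Fin b) ℝ) (v : Fin b → ℝ) :
    euclNorm (A *ᵥ v) ≤ ‖A‖ * euclNorm v := by
  simpa [euclNorm_eq_norm_toLp] using A.l2_opNorm_mulVec (WithLp.toLp 2 v)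

lemma spNorm_eq_l2_opNorm {a b : ℕ} (A : Matrix (Fin a) (Fin b) ℝ) : spNorm A = ‖A‖ := by
  have hle : ∀ v : {v : Fin b → ℝ // euclNorm v ≤ 1}, euclNorm (A *ᵥ v.1) ≤ ‖A‖ := fun v =>
    (euclNorm_mulVec_le A v.1).trans (mul_le_of_le_one_right (norm_nonneg A) v.2)
  have hbdd : BddAbove (Set.range fun v : {v : Fin b → ℝ // euclNorm v ≤ 1} =>
      euclNorm (A *ᵥ v.1)) := ⟨‖A‖, Set.forall_mem_range.2 hle⟩
  refine le_antisymm (Real.iSup_le hle (norm_nonneg A)) ?_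
  refine ContinuousLinearMap.opNorm_le_of_unit_norm ?_ fun x hx => ?_
  · exact (Real.sqrt_nonneg _).trans (le_ciSup hbdd ⟨0, by simp [euclNorm]⟩)
  · have := le_ciSup hbdd ⟨x.ofLp, by simp [euclNorm_eq_norm_toLp, hx]⟩
    simpa [spNorm, euclNorm_eq_norm_toLp, Matrix.toLpLin_apply] using this

lemma l2_opNorm_le_of_abs_dotProduct_mulVec_le {a b : ℕ} (A : Matrix (Fin a) (Fin b) ℝ)
    {K : ℝ} (hK : 0 ≤ K) (h : ∀ u v, |u ⬝ᵥ A *ᵥ v| ≤ K * (euclNorm u * euclNorm v)) : ‖A‖ ≤ K := by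
  rw [← spNorm_eq_l2_opNorm]
  refine Real.iSup_le (fun ⟨v, hv⟩ => ?_) hK
  have hAv : euclNorm (A *ᵥ v) ^ 2 ≤ K * euclNorm (A *ᵥ v) := calc
    euclNorm (A *ᵥ v) ^ 2 ≤ |(A *ᵥ v) ⬝ᵥ A *ᵥ v| :=
      (euclNorm_sq_eq_dotProduct _).trans_le (le_abs_self _)
    _ ≤ K * (euclNorm (A *ᵥ v) * euclNorm v) := h _ _
    _ ≤ K * euclNorm (A *ᵥ v) := by
      gcongr
      exact mul_le_of_le_one_right (Real.sqrt_nonneg _) hv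
  have hAv_nonneg : 0 ≤ euclNorm (A *ᵥ v) := Real.sqrt_nonneg _
  nlinarith

lemma l2_opNorm_transpose_mul_mul_le {a b : ℕ} (B : Matrix (Fin a) (Fin b) ℝ)
    (G : Matrix (Fin a) (Fin a) ℝ) : ‖Bᵀ * G * B‖ ≤ ‖B‖ ^ 2 * ‖G‖ := by
  have hBt : ‖Bᵀ‖ = ‖B‖ := by
    rw [← Matrix.conjTranspose_eq_transpose_of_trivial, Matrix.l2_opNorm_conjTranspose]
  calc ‖Bᵀ * G * B‖ ≤ ‖Bᵀ‖ * ‖G‖ * ‖B‖ :=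
        (Matrix.l2_opNorm_mul _ _).trans (by gcongr; exact Matrix.l2_opNorm_mul _ _)
    _ = ‖B‖ ^ 2 * ‖G‖ := by rw [hBt]; ring

lemma sum_sum_erase_mul_le {k : ℕ} (a b : Fin k → ℝ) :
    ∑ i, ∑ j ∈ univ.erase i, a i * b j ≤ ((k : ℝ) - 1) * (euclNorm a * euclNorm b) := by
  rcases k with _ | k
  · simp [euclNorm]
  have ha : ∑ i, ∑ j ∈ univ.erase i, a i ^ 2 = k * ∑ i, a i ^ 2 := by simp [mul_sum]
  have hb : ∑ i, ∑ j ∈ univ.erase i, b j ^ 2 = k * ∑ i, b i ^ 2 := by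
    simp [sum_erase_eq_sub, sum_sub_distrib]; ring
  calc ∑ i, ∑ j ∈ univ.erase i, a i * b j
      = ∑ x ∈ univ.sigma fun i => univ.erase i, a x.1 * b x.2 :=
        (sum_sigma univ (fun i => univ.erase i) fun x => a x.1 * b x.2).symm
    _ ≤ √(∑ x ∈ univ.sigma fun i => univ.erase i, a x.1 ^ 2)
          * √(∑ x ∈ univ.sigma fun i => univ.erase i, b x.2 ^ 2) :=
        Real.sum_mul_le_sqrt_mul_sqrt _ _ _
    _ = ((k + 1 : ℕ) - 1 : ℝ) * (euclNorm a * euclNorm b) := by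
        rw [sum_sigma, sum_sigma, ha, hb, Real.sqrt_mul (by positivity),
          Real.sqrt_mul (by positivity), euclNorm, euclNorm, Nat.cast_add_one, add_sub_cancel_right]
        linear_combination (√(∑ i, a i ^ 2) * √(∑ i, b i ^ 2)) *
          Real.mul_self_sqrt (Nat.cast_nonneg (α := ℝ) k)

lemma abs_dotProduct_mulVec_le_of_abs_apply_le {k : ℕ} (G : Matrix (Fin k) (Fin k) ℝ)
    {α β : ℝ} (hα : 0 ≤ α) (hβ : 0 ≤ β) (hdiag : ∀ i, |G i i| ≤ α)
    (hoff : ∀ i j, i ≠ j → |G i j| ≤ β) (a b : Fin k → ℝ) :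
    |a ⬝ᵥ G *ᵥ b| ≤ (α + ((k : ℝ) - 1) * β) * (euclNorm a * euclNorm b) := by
  have hsplit : a ⬝ᵥ G *ᵥ b
      = ∑ i, a i * G i i * b i + ∑ i, ∑ j ∈ univ.erase i, a i * G i j * b j := by
    simp only [dotProduct, mulVec, mul_sum, ← sum_add_distrib]
    refine sum_congr rfl fun i _ => ?_
    rw [← add_sum_erase _ _ (mem_univ i)]
    simp only [mul_assoc]
  have hdiag_sum : |∑ i, a i * G i i * b i| ≤ α * (euclNorm a * euclNorm b) := calc
    |∑ i, a i * G i i * b i| ≤ ∑ i, α * (|a i| * |b i|) := by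
      refine (abs_sum_le_sum_abs _ _).trans (sum_le_sum fun i _ => ?_)
      rw [abs_mul, abs_mul, mul_right_comm, mul_comm α]
      exact mul_le_mul_of_nonneg_left (hdiag i) (by positivity)
    _ ≤ α * (euclNorm a * euclNorm b) := by
      rw [← mul_sum, ← euclNorm_abs a, ← euclNorm_abs b]
      gcongr
      exact Real.sum_mul_le_sqrt_mul_sqrt _ _ _
  have hoff_sum : |∑ i, ∑ j ∈ univ.erase i, a i * G i j * b j|
      ≤ β * (((k : ℝ) - 1) * (euclNorm a * euclNorm b)) := calc
    |∑ i, ∑ j ∈ univ.erase i, a i * G i j * b j|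
        ≤ β * ∑ i, ∑ j ∈ univ.erase i, |a i| * |b j| := by
      simp only [mul_sum]
      refine (abs_sum_le_sum_abs _ _).trans (sum_le_sum fun i _ => ?_)
      refine (abs_sum_le_sum_abs _ _).trans (sum_le_sum fun j hj => ?_)
      rw [abs_mul, abs_mul, mul_right_comm, mul_comm β]
      exact mul_le_mul_of_nonneg_left (hoff i j (ne_of_mem_erase hj).symm) (by positivity)
    _ ≤ β * (((k : ℝ) - 1) * (euclNorm a * euclNorm b)) := by
      rw [← euclNorm_abs a, ← euclNorm_abs b]
      gcongr
      simpa only [Pi.abs_apply] using sum_sum_erase_mul_le |a| |b|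
  rw [hsplit]
  refine (abs_add_le _ _).trans ?_
  linear_combination hdiag_sum + hoff_sum

lemma l2_opNorm_le_of_abs_apply_le {k : ℕ} (hk : 1 ≤ k) (G : Matrix (Fin k) (Fin k) ℝ) {α β : ℝ}
    (hα : 0 ≤ α) (hβ : 0 ≤ β) (hdiag : ∀ i, |G i i| ≤ α)
    (hoff : ∀ i j, i ≠ j → |G i j| ≤ β) : ‖G‖ ≤ α + ((k : ℝ) - 1) * β := by
  have hk' : (0 : ℝ) ≤ k - 1 := sub_nonneg.2 (by exact_mod_cast hk)
  refine l2_opNorm_le_of_abs_dotProduct_mulVec_le G (by positivity) ?_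
  exact abs_dotProduct_mulVec_le_of_abs_apply_le G hα hβ hdiag hoff

lemma IsMP.mul_eq_one {a b : ℕ} {A : Matrix (Fin a) (Fin b) ℝ} {A' : Matrix (Fin b) (Fin a) ℝ}
    (h : IsMP A A') (hA : Function.Surjective A.mulVec) : A * A' = 1 := by
  obtain ⟨B, hB⟩ := Matrix.mulVec_surjective_iff_exists_right_inverse.1 hA
  calc A * A' = A * A' * (A * B) := by rw [hB, Matrix.mul_one]
    _ = 1 := by rw [← Matrix.mul_assoc, h.1, hB]

lemma IsMP.transpose_mul_mul_mul_eq {a b : ℕ} {A : Matrix (Fin a) (Fin b) ℝ}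
    {A' : Matrix (Fin b) (Fin a) ℝ} (h : IsMP A A') (hA : Function.Surjective A.mulVec)
    (E : Matrix (Fin a) (Fin a) ℝ) : A'ᵀ * (Aᵀ * E * A) * A' = E := by
  calc A'ᵀ * (Aᵀ * E * A) * A' = (A * A')ᵀ * E * (A * A') := by
        simp only [Matrix.transpose_mul, Matrix.mul_assoc]
    _ = E := by rw [h.mul_eq_one hA]; simp

lemma mulVec_surjective_of_span_eq_top {n p : ℕ} {D : Matrix (Fin n) (Fin p) ℝ}
    {d : Fin p → Eu n} (hD : ∀ k i, D k i = d i k) (hspan : Submodule.span ℝ (Set.range d) = ⊤) :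
    Function.Surjective D.mulVec := by
  let e : Eu n ≃ₗ[ℝ] (Fin n → ℝ) := WithLp.linearEquiv 2 ℝ (Fin n → ℝ)
  have hcol : D.col = (e : Eu n →ₗ[ℝ] (Fin n → ℝ)) ∘ d := by
    ext i k; simp [e, hD]
  have hrange : LinearMap.range D.mulVecLin = ⊤ := by
    rw [Matrix.range_mulVecLin, hcol, Set.range_comp, Submodule.span_image, hspan,
      Submodule.map_top, LinearEquiv.range]
  exact LinearMap.range_eq_top.1 hrange

lemma transpose_mul_mul_apply_of_col {n p : ℕ} {D : Matrix (Fin n) (Fin p) ℝ}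
    {d : Fin p → Eu n} (hD : ∀ k i, D k i = d i k) (E : Matrix (Fin n) (Fin n) ℝ) (i j : Fin p) :
    (Dᵀ * E * D) i j = d i ⬝ᵥ E *ᵥ d j := by
  simp only [Matrix.mul_apply, Matrix.transpose_apply, dotProduct, mulVec, hD, sum_mul,
    mul_sum]
  rw [sum_comm]
  simp only [mul_assoc]

lemma l2_opNorm_le_of_frame_bounds {n p : ℕ} (hp : 1 ≤ p) {d : Fin p → Eu n}
    (hspan : Submodule.span ℝ (Set.range d) = ⊤) {D : Matrix (Fin n) (Fin p) ℝ}
    (hD : ∀ k i, D k i = d i k) {Δ : ℝ} (hΔ : Δ ≠ 0) {Dbp : Matrix (Fin p) (Fin n) ℝ}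
    (hDbp : IsMP (Δ⁻¹ • D) Dbp) (E : Matrix (Fin n) (Fin n) ℝ) {α β : ℝ} (hα : 0 ≤ α)
    (hβ : 0 ≤ β) (hdiag : ∀ i, |d i ⬝ᵥ E *ᵥ d i| ≤ α * Δ ^ 2)
    (hoff : ∀ i j, i ≠ j → |d i ⬝ᵥ E *ᵥ d j| ≤ β * Δ ^ 2) :
    ‖E‖ ≤ ‖Dbp‖ ^ 2 * (α + ((p : ℝ) - 1) * β) := by
  set G := (Δ⁻¹ • D)ᵀ * E * (Δ⁻¹ • D)
  have hM : Function.Surjective (Δ⁻¹ • D).mulVec := fun y => by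
    obtain ⟨x, rfl⟩ := mulVec_surjective_of_span_eq_top hD hspan y
    exact ⟨Δ • x, by rw [Matrix.smul_mulVec, Matrix.mulVec_smul, smul_smul,
      inv_mul_cancel₀ hΔ, one_smul]⟩
  have hG : ∀ {i j γ}, |d i ⬝ᵥ E *ᵥ d j| ≤ γ * Δ ^ 2 → |G i j| ≤ γ := fun {i j γ} h => by
    have hGij : G i j = Δ⁻¹ ^ 2 * (d i ⬝ᵥ E *ᵥ d j) := by
      simp [G, Matrix.transpose_smul, Matrix.smul_mul, Matrix.mul_smul, smul_smul,
        transpose_mul_mul_apply_of_col hD, sq]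
    rw [hGij, abs_mul, abs_of_nonneg (by positivity)]
    calc Δ⁻¹ ^ 2 * |d i ⬝ᵥ E *ᵥ d j| ≤ Δ⁻¹ ^ 2 * (γ * Δ ^ 2) := by gcongr
      _ = γ := by field_simp
  calc ‖E‖ = ‖Dbpᵀ * G * Dbp‖ := by rw [hDbp.transpose_mul_mul_mul_eq hM]
    _ ≤ ‖Dbp‖ ^ 2 * ‖G‖ := l2_opNorm_transpose_mul_mul_le Dbp G
    _ ≤ ‖Dbp‖ ^ 2 * (α + ((p : ℝ) - 1) * β) := by
      gcongr
      exact l2_opNorm_le_of_abs_apply_le hp G hα hβ (fun i => hG (hdiag i))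
        fun i j hij => hG (hoff i j hij)

theorem stmt_18_general {n p : ℕ} (hp : 0 < p)
    (Hf : Eu n → Matrix (Fin n) (Fin n) ℝ) (L : ℝ) (hL : 0 ≤ L)
    (x0 : Eu n) (d : Fin p → Eu n) (hd : ∀ i, d i ≠ 0)
    (hspan : Submodule.span ℝ (Set.range d) = ⊤)
    (D : Matrix (Fin n) (Fin p) ℝ) (hD : ∀ k i, D k i = d i k)
    (Δ : ℝ) (hΔ : Δ = ⨆ k, ‖d k‖)
    (Dbp : Matrix (Fin p) (Fin n) ℝ) (hDbp : IsMP (Δ⁻¹ • D) Dbp)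
    (H : Matrix (Fin n) (Fin n) ℝ)
    (C : ℝ) (hC : 0 ≤ C)
    (hdiag : ∀ i, |(d i) ⬝ᵥ (H - Hf x0).mulVec (d i)| ≤ L / 3 * ‖d i‖ ^ 3)
    (hoff : ∀ i j, i ≠ j → |(d i) ⬝ᵥ (H - Hf x0).mulVec (d j)| ≤ C * Δ ^ 2) :
    spNorm (H - Hf x0)
      ≤ ((p : ℝ) - 1 / p) * C * spNorm Dbp ^ 2
        + L / 3 * spNorm Dbp ^ 2 * (2 * p - 2 / p + 1) * Δ := by
  have hd_le : ∀ i, ‖d i‖ ≤ Δ := fun i => by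
    rw [hΔ]; exact le_ciSup (Set.finite_range fun k => ‖d k‖).bddAbove i
  have hΔ_pos : 0 < Δ := (norm_pos_iff.2 (hd ⟨0, hp⟩)).trans_le (hd_le _)
  have hdiag' : ∀ i, |d i ⬝ᵥ (H - Hf x0) *ᵥ d i| ≤ L / 3 * Δ * Δ ^ 2 := fun i => by
    calc _ ≤ L / 3 * ‖d i‖ ^ 3 := hdiag i
      _ ≤ L / 3 * Δ ^ 3 := by gcongr; exact hd_le i
      _ = L / 3 * Δ * Δ ^ 2 := by ring
  have hE := l2_opNorm_le_of_frame_bounds hp hspan hD hΔ_pos.ne' hDbp (H - Hf x0)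
    (by positivity) hC hdiag' hoff
  have hp_one : (1 : ℝ) ≤ p := by exact_mod_cast hp
  have hp_inv : 1 / (p : ℝ) ≤ 1 := div_le_one_of_le₀ hp_one (by positivity)
  have hC_slack : 0 ≤ ‖Dbp‖ ^ 2 * C * (1 - 1 / p) :=
    mul_nonneg (by positivity) (sub_nonneg.2 hp_inv)
  have hL_slack : 0 ≤ ‖Dbp‖ ^ 2 * (L / 3 * Δ) * (p - 1 / p) :=
    mul_nonneg (by positivity) (by linarith)
  rw [spNorm_eq_l2_opNorm, spNorm_eq_l2_opNorm]
  linear_combination hE + hC_slack + 2 * hL_slack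

theorem stmt_18 {n p : ℕ} (hp : 0 < p) (f : Eu n → ℝ) (g : Eu n → Eu n)
    (Hf : Eu n → Matrix (Fin n) (Fin n) ℝ) (L : ℝ) (hL : 0 ≤ L)
    (hgrad : ∀ x, HasGradientAt f (g x) x)
    (hhess : ∀ x, HasFDerivAt g (Matrix.toEuclideanCLM (𝕜 := ℝ) (Hf x)) x)
    (hlip : ∀ x y, spNorm (Hf x - Hf y) ≤ L * ‖x - y‖)
    (x0 : Eu n) (d : Fin p → Eu n) (hd : ∀ i, d i ≠ 0)
    (hspan : Submodule.span ℝ (Set.range d) = ⊤)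
    (D : Matrix (Fin n) (Fin p) ℝ) (hD : ∀ k i, D k i = d i k)
    (Δ : ℝ) (hΔ : Δ = ⨆ k, ‖d k‖)
    (Dbp : Matrix (Fin p) (Fin n) ℝ) (hDbp : IsMP (Δ⁻¹ • D) Dbp)
    (H : Matrix (Fin n) (Fin n) ℝ) (hH : H.IsSymm)
    (C : ℝ) (hC : 0 ≤ C)
    (hdiag : ∀ i, |(d i) ⬝ᵥ (H - Hf x0).mulVec (d i)| ≤ L / 3 * ‖d i‖ ^ 3)
    (hoff : ∀ i j, i ≠ j → |(d i) ⬝ᵥ (H - Hf x0).mulVec (d j)| ≤ C * Δ ^ 2) :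
    spNorm (H - Hf x0)
      ≤ ((p : ℝ) - 1 / p) * C * spNorm Dbp ^ 2
        + L / 3 * spNorm Dbp ^ 2 * (2 * p - 2 / p + 1) * Δ :=
  stmt_18_general hp Hf L hL x0 d hd hspan D hD Δ hΔ Dbp hDbp H C hC hdiag hoff
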